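/- Let H be an adjacency k-resolved connected graph of order n₂ and let G be a connected graph with at least two vertices and diameter D(G) < k. Then dim_l(G ⊠ H) ≤ n₂·dim_l(G). -/

import Mathlib

open SimpleGraph

/-- The strong product of two simple graphs. -/
def strongProd {α β : Type*} (G : SimpleGraph α) (H : SimpleGraph β) :
    SimpleGraph (α × β) where
  Adj x y := (x.1 = y.1 ∧ H.Adj x.2 y.2) ∨ (x.2 = y.2 ∧ G.Adj x.1 y.1) ∨
      (G.Adj x.1 y.1 ∧ H.Adj x.2 y.2)
  symm := ⟨by
    rintro x y (⟨h1, h2⟩ | ⟨h1, h2⟩ | ⟨h1, h2⟩)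
    · exact Or.inl ⟨h1.symm, h2.symm⟩
    · exact Or.inr (Or.inl ⟨h1.symm, h2.symm⟩)
    · exact Or.inr (Or.inr ⟨h1.symm, h2.symm⟩)⟩
  loopless := ⟨by
    rintro x (⟨_, h⟩ | ⟨_, h⟩ | ⟨h, _⟩)
    · exact H.irrefl h
    · exact G.irrefl h
    · exact G.irrefl h⟩

/-- A set `S` is a local metric generator for `G` if every pair of adjacent
vertices is distinguished by some element of `S`. -/
def IsLocalMetricGenerator {α : Type*} (G : SimpleGraph α) (S : Set α) : Prop :=
  ∀ u v : α, G.Adj u v → ∃ s ∈ S, G.dist u s ≠ G.dist v s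

/-- The local metric dimension of a graph. -/
noncomputable def localMetricDim {α : Type*} [Fintype α] (G : SimpleGraph α) : ℕ :=
  sInf {n | ∃ S : Finset α, S.card = n ∧ IsLocalMetricGenerator G ↑S}

/-- A set `S` is a metric generator for `G` if every pair of distinct
vertices is distinguished by some element of `S`. -/
def IsMetricGenerator {α : Type*} (G : SimpleGraph α) (S : Set α) : Prop :=
  ∀ u v : α, u ≠ v → ∃ s ∈ S, G.dist u s ≠ G.dist v s

/-- The metric dimension of a graph. -/
noncomputable def metricDim {α : Type*} [Fintype α] (G : SimpleGraph α) : ℕ :=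
  sInf {n | ∃ S : Finset α, S.card = n ∧ IsMetricGenerator G ↑S}

/-- The eccentricity of a vertex: the maximum distance to another vertex. -/
noncomputable def eccentricity {α : Type*} (G : SimpleGraph α) (v : α) : ℕ :=
  sSup {d | ∃ u, G.dist v u = d}

/-- The diameter of a graph: maximum eccentricity. -/
noncomputable def graphDiam {α : Type*} (G : SimpleGraph α) : ℕ :=
  sSup {d | ∃ v, eccentricity G v = d}

/-- The radius of a graph: minimum eccentricity. -/
noncomputable def graphRadius {α : Type*} (G : SimpleGraph α) : ℕ :=
  sInf {d | ∃ v, eccentricity G v = d}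

/-- The interval `I[x,y]`: vertices lying on some shortest `x`–`y` path. -/
def interval {α : Type*} (G : SimpleGraph α) (x y : α) : Set α :=
  {w | G.dist x w + G.dist w y = G.dist x y}

/-- A graph is adjacency `k`-resolved if for every pair of adjacent vertices
`x, y` there is a vertex `w` with `d(y,w) ≥ k` and `x ∈ I[y,w]`, or
`d(x,w) ≥ k` and `y ∈ I[x,w]`. -/
def AdjKResolved {α : Type*} (G : SimpleGraph α) (k : ℕ) : Prop :=
  ∀ x y : α, G.Adj x y →
    ∃ w : α, (k ≤ G.dist y w ∧ x ∈ interval G y w) ∨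
      (k ≤ G.dist x w ∧ y ∈ interval G x w)

/-- The true twin equivalence relation: `u ≈ v` iff `N[u] = N[v]`. -/
def trueTwinSetoid {α : Type*} (G : SimpleGraph α) : Setoid α where
  r u v := insert u (G.neighborSet u) = insert v (G.neighborSet v)
  iseqv := ⟨fun _ => rfl, Eq.symm, Eq.trans⟩

/-!
Distances in `G ⊠ H` are maxima: `d((a,b),(c,d)) = max (d_G(a,c)) (d_H(b,d))`. Take a minimum
local metric generator `S` of `G`; it is nonempty because `G` has an edge. Then `S × V(H)` is a
local metric generator of `G ⊠ H`. An edge moving the first coordinate is resolved by `(s, ·)` for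
the `s ∈ S` resolving that edge in `G`. An edge `(a,x) ~ (a,y)` inside an `H`-fibre is resolved by
`(s, w)`, where `w` is the vertex given by adjacency `k`-resolvedness: both `d_H(x,w)` and
`d_H(y,w)` are at least `k - 1 ≥ D(G) ≥ d_G(a,s)`, so the `H`-coordinate dominates the maximum and
the two distances differ by one.
-/

namespace SimpleGraph

variable {U V : Type*} {G : SimpleGraph U} {K : SimpleGraph V}

theorem Walk.exists_walk_length_le_of_adj_or_eq (f : U → V)
    (hf : ∀ ⦃u v⦄, G.Adj u v → K.Adj (f u) (f v) ∨ f u = f v) {u v : U} (p : G.Walk u v) :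
    ∃ q : K.Walk (f u) (f v), q.length ≤ p.length := by
  induction p with
  | nil => exact ⟨.nil, le_rfl⟩
  | cons h _ ih =>
    obtain ⟨q, hq⟩ := ih
    rcases hf h with h' | h'
    · exact ⟨.cons h' q, by simpa using hq⟩
    · exact ⟨q.copy h'.symm rfl, by rw [Walk.length_copy, Walk.length_cons]; omega⟩

end SimpleGraph

section StrongProduct

variable {α β : Type*} {G : SimpleGraph α} {H : SimpleGraph β}

theorem exists_walk_strongProd_length_le {a c : α} {b d : β} (p : G.Walk a c) (q : H.Walk b d) :
    ∃ w : (strongProd G H).Walk (a, b) (c, d), w.length ≤ max p.length q.length := by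
  induction p generalizing b d with
  | @nil a =>
    let f : H →g strongProd G H := ⟨Prod.mk a, fun h => Or.inl ⟨rfl, h⟩⟩
    exact ⟨q.map f, by simp⟩
  | cons h p ih =>
    cases q with
    | @nil b =>
      let f : G →g strongProd G H := ⟨(·, b), fun h => Or.inr (Or.inl ⟨rfl, h⟩)⟩
      exact ⟨(Walk.cons h p).map f, by simp⟩
    | cons h' q =>
      obtain ⟨w, hw⟩ := ih q
      refine ⟨.cons (Or.inr (Or.inr ⟨h, h'⟩)) w, ?_⟩
      show w.length + 1 ≤ max (p.length + 1) (q.length + 1)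
      omega

theorem strongProd_dist {a c : α} {b d : β} (hac : G.Reachable a c) (hbd : H.Reachable b d) :
    (strongProd G H).dist (a, b) (c, d) = max (G.dist a c) (H.dist b d) := by
  obtain ⟨p, hp⟩ := hac.exists_walk_length_eq_dist
  obtain ⟨q, hq⟩ := hbd.exists_walk_length_eq_dist
  obtain ⟨w, hw⟩ := exists_walk_strongProd_length_le p q
  refine le_antisymm ((dist_le w).trans (hp ▸ hq ▸ hw)) ?_
  obtain ⟨w, hw⟩ := w.reachable.exists_walk_length_eq_dist
  obtain ⟨p', hp'⟩ := w.exists_walk_length_le_of_adj_or_eq (K := G) Prod.fst <| by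
    rintro x y (⟨he, -⟩ | ⟨-, h⟩ | ⟨h, -⟩) <;> simp [*]
  obtain ⟨q', hq'⟩ := w.exists_walk_length_le_of_adj_or_eq (K := H) Prod.snd <| by
    rintro x y (⟨-, h⟩ | ⟨he, -⟩ | ⟨-, h⟩) <;> simp [*]
  exact max_le ((dist_le p').trans (hw ▸ hp')) ((dist_le q').trans (hw ▸ hq'))

end StrongProduct

theorem dist_le_graphDiam {α : Type*} [Finite α] (G : SimpleGraph α) (a c : α) :
    G.dist a c ≤ graphDiam G :=
  calc G.dist a c ≤ eccentricity G a := le_csSup (Set.finite_range _).bddAbove ⟨c, rfl⟩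
    _ ≤ graphDiam G := le_csSup (Set.finite_range _).bddAbove ⟨a, rfl⟩

section LocalMetricDim

variable {α : Type*} {G : SimpleGraph α}

theorem isLocalMetricGenerator_univ : IsLocalMetricGenerator G Set.univ := fun u v huv =>
  ⟨u, trivial, by simp [dist_comm, dist_eq_one_iff_adj.mpr huv]⟩

theorem IsLocalMetricGenerator.nonempty {S : Set α} (hS : IsLocalMetricGenerator G S) {u v : α}
    (huv : G.Adj u v) : S.Nonempty :=
  let ⟨s, hs, _⟩ := hS u v huv
  ⟨s, hs⟩

variable [Fintype α]

theorem localMetricDim_le_card {S : Finset α} (hS : IsLocalMetricGenerator G S) :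
    localMetricDim G ≤ S.card :=
  Nat.sInf_le ⟨S, rfl, hS⟩

theorem exists_isLocalMetricGenerator_card_eq_localMetricDim (G : SimpleGraph α) :
    ∃ S : Finset α, S.card = localMetricDim G ∧ IsLocalMetricGenerator G S := by
  unfold localMetricDim
  exact Nat.sInf_mem (s := {n | ∃ S : Finset α, S.card = n ∧ IsLocalMetricGenerator G S})
    ⟨_, Finset.univ, rfl, by simpa using isLocalMetricGenerator_univ⟩

end LocalMetricDim

section StrongProductGenerator

variable {α β : Type*} {G : SimpleGraph α} {H : SimpleGraph β}

theorem AdjKResolved.exists_max_dist_ne {k : ℕ} (hres : AdjKResolved H k) {x y : β}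
    (hxy : H.Adj x y) {m : ℕ} (hm : m < k) :
    ∃ w : β, max m (H.dist x w) ≠ max m (H.dist y w) := by
  have hxy' := dist_eq_one_iff_adj.mpr hxy
  have hyx := dist_eq_one_iff_adj.mpr hxy.symm
  obtain ⟨w, ⟨hk, hint⟩ | ⟨hk, hint⟩⟩ := hres x y hxy
  all_goals
    simp only [interval, Set.mem_ofPred_eq] at hint
    exact ⟨w, by omega⟩

theorem exists_strongProd_dist_ne_of_dist_ne (hG : G.Preconnected) (hH : H.Preconnected)
    {u v s : α} (b c : β) (h : G.dist u s ≠ G.dist v s) :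
    ∃ t : β, (strongProd G H).dist (u, b) (s, t) ≠ (strongProd G H).dist (v, c) (s, t) := by
  simp only [strongProd_dist (hG _ _) (hH _ _)]
  rcases h.lt_or_gt with h | h
  · exact ⟨b, by rw [dist_self]; omega⟩
  · exact ⟨c, by rw [dist_self]; omega⟩

theorem IsLocalMetricGenerator.prod_univ (hG : G.Preconnected) (hH : H.Preconnected) {S : Set α}
    (hS : IsLocalMetricGenerator G S) (hne : S.Nonempty) {k : ℕ} (hres : AdjKResolved H k)
    (hk : ∀ a c, G.dist a c < k) :
    IsLocalMetricGenerator (strongProd G H) (S ×ˢ Set.univ) := by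
  obtain ⟨s₀, hs₀⟩ := hne
  rintro ⟨u, b⟩ ⟨v, c⟩ (⟨rfl, hbc⟩ | ⟨-, huv⟩ | ⟨huv, -⟩)
  · obtain ⟨w, hw⟩ := hres.exists_max_dist_ne hbc (hk u s₀)
    exact ⟨(s₀, w), ⟨hs₀, trivial⟩, by simpa only [strongProd_dist (hG _ _) (hH _ _)]⟩
  all_goals
    obtain ⟨s, hs, hdist⟩ := hS u v huv
    obtain ⟨t, ht⟩ := exists_strongProd_dist_ne_of_dist_ne hG hH b c hdist
    exact ⟨(s, t), ⟨hs, trivial⟩, ht⟩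

end StrongProductGenerator

/-- if `H` is adjacency `k`-resolved and `D(G) < k`, then
`dim_l(G ⊠ H) ≤ n₂ · dim_l(G)`. -/
theorem stmt1 {α β : Type*} [Fintype α] [Fintype β]
    (G : SimpleGraph α) (H : SimpleGraph β)
    (hH : H.Connected) (k : ℕ) (hres : AdjKResolved H k)
    (hG : G.Connected) (hn1 : 2 ≤ Fintype.card α)
    (hD : graphDiam G < k) :
    localMetricDim (strongProd G H) ≤ Fintype.card β * localMetricDim G := by
  have : Nontrivial α := Fintype.one_lt_card_iff_nontrivial.mp hn1
  obtain ⟨b, hab⟩ := hG.preconnected.exists_adj_of_nontrivial hG.nonempty.some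
  obtain ⟨S, hcard, hS⟩ := exists_isLocalMetricGenerator_card_eq_localMetricDim G
  have hSH : IsLocalMetricGenerator (strongProd G H) ↑(S ×ˢ (Finset.univ : Finset β)) := by
    simpa using hS.prod_univ hG.preconnected hH.preconnected (hS.nonempty hab) hres
      fun a c => (dist_le_graphDiam G a c).trans_lt hD
  calc localMetricDim (strongProd G H) ≤ (S ×ˢ Finset.univ).card := localMetricDim_le_card hSH
    _ = Fintype.card β * localMetricDim G := by
      rw [Finset.card_product, Finset.card_univ, hcard, mul_comm]
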